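/- arXiv:1202.1089 — 5 statements merged into one kernel-verified Lean document; each statement's English description precedes it below -/
import Mathlib

section
/- Every eigenvalue of the n×n symmetric tridiagonal matrix A with zeros on the diagonal and 1/2 on the off-diagonals has absolute value strictly less than 1; in particular the spectral radius of A equals cos(π/(n+1)). -/
open Real

/-- Chebyshev-like sequence: `cheb x j = U_{j-1}(x)`. -/
private def cheb (x : ℝ) : ℕ → ℝ
  | 0 => 0
  | 1 => 1
  | (j+2) => 2*x*cheb x (j+1) - cheb x j

private lemma cheb_ge (x : ℝ) (hx : 1 ≤ x) :
    ∀ j : ℕ, (j : ℝ) ≤ cheb x j ∧ cheb x j + 1 ≤ cheb x (j+1) := by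
  intro j
  induction j with
  | zero => simp [cheb]
  | succ j ih =>
    obtain ⟨h1, h2⟩ := ih
    constructor
    · push_cast; linarith
    · show cheb x (j+1) + 1 ≤ cheb x (j+2)
      have hj1 : (1:ℝ) ≤ cheb x (j+1) := by linarith
      have : cheb x (j+2) = 2*x*cheb x (j+1) - cheb x j := rfl
      nlinarith

private lemma cheb_sin (θ : ℝ) :
    ∀ j : ℕ, cheb (Real.cos θ) j * Real.sin θ = Real.sin (j * θ) := by
  intro j
  induction j using Nat.twoStepInduction with
  | zero => simp [cheb]
  | one => simp [cheb]
  | more j ih1 ih2 =>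
    have h : cheb (Real.cos θ) (j+2) = 2*Real.cos θ*cheb (Real.cos θ) (j+1) - cheb (Real.cos θ) j := rfl
    have e1 : Real.sin ((j+1)*θ + θ) = Real.sin ((j+1)*θ) * Real.cos θ + Real.cos ((j+1)*θ) * Real.sin θ :=
      Real.sin_add _ _
    have e2 : Real.sin ((j+1)*θ - θ) = Real.sin ((j+1)*θ) * Real.cos θ - Real.cos ((j+1)*θ) * Real.sin θ :=
      Real.sin_sub _ _
    have e3 : ((j:ℝ)+1)*θ + θ = ((j+2 : ℕ) : ℝ) * θ := by push_cast; ring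
    have e4 : ((j:ℝ)+1)*θ - θ = ((j : ℕ) : ℝ) * θ := by push_cast; ring
    rw [h]
    have ih2' : cheb (Real.cos θ) (j+1) * Real.sin θ = Real.sin (((j:ℝ)+1) * θ) := by
      rw [ih2]; push_cast; ring_nf
    rw [e3] at e1
    rw [e4] at e2
    linear_combination (2*Real.cos θ) * ih2' - ih1 - e1 - e2

private lemma cheb_neg (x : ℝ) :
    ∀ j : ℕ, cheb (-x) j = (-1)^(j+1) * cheb x j := by
  intro j
  induction j using Nat.twoStepInduction with
  | zero => simp [cheb]
  | one => simp [cheb]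
  | more j ih1 ih2 =>
    show 2*(-x)*cheb (-x) (j+1) - cheb (-x) j = (-1)^(j+3) * (2*x*cheb x (j+1) - cheb x j)
    rw [ih1, ih2]; ring

private lemma cheb_root_bound (n : ℕ) (hn : 1 ≤ n) (x : ℝ)
    (h0 : cheb x (n+1) = 0) : |x| ≤ Real.cos (π / (n+1)) := by
  have hθ0pos : 0 < π / (n+1) := by
    apply div_pos Real.pi_pos; positivity
  have hθ0le : π / (n+1) ≤ π / 2 := by
    apply div_le_div_of_nonneg_left Real.pi_pos.le (by norm_num)
    · push_cast; have : (1:ℝ) ≤ (n:ℝ) := by exact_mod_cast hn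
      linarith
  -- reduce to the nonneg case
  have key : ∀ y : ℝ, 0 ≤ y → cheb y (n+1) = 0 → y ≤ Real.cos (π / (n+1)) := by
    intro y hy h0y
    by_contra hgt
    push_neg at hgt
    rcases le_or_gt 1 y with h1 | h1
    · have := (cheb_ge y h1 (n+1)).1
      have : (0:ℝ) < (n:ℝ) + 1 := by positivity
      rw [h0y] at *
      push_cast at *
      linarith [(cheb_ge y h1 (n+1)).1, h0y]
    · set θ := Real.arccos y with hθ
      have hy1 : y ≤ 1 := h1.le
      have hyn1 : (-1:ℝ) ≤ y := by linarith
      have hcos : Real.cos θ = y := Real.cos_arccos hyn1 hy1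
      have hθlt : θ < π / (n+1) := by
        have := Real.strictAntiOn_arccos (a := Real.cos (π/(n+1))) (b := y)
          ⟨Real.neg_one_le_cos _, Real.cos_le_one _⟩ ⟨hyn1, hy1⟩ hgt
        rwa [Real.arccos_cos hθ0pos.le (by linarith [Real.pi_pos]), ← hθ] at this
      have hθpos : 0 < θ := Real.arccos_pos.mpr h1
      have hsinθ : 0 < Real.sin θ := Real.sin_pos_of_pos_of_lt_pi hθpos
        (by linarith [Real.pi_pos])
      have hsin2 : 0 < Real.sin (((n:ℝ)+1) * θ) := by
        apply Real.sin_pos_of_pos_of_lt_pi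
        · positivity
        · have : ((n:ℝ)+1) * θ < ((n:ℝ)+1) * (π/(n+1)) := by
            apply mul_lt_mul_of_pos_left hθlt; positivity
          calc ((n:ℝ)+1) * θ < ((n:ℝ)+1) * (π/(n+1)) := this
            _ = π := by field_simp
      have := cheb_sin θ (n+1)
      rw [hcos, h0y] at this
      push_cast at this
      nlinarith
  rcases le_or_gt 0 x with hx | hx
  · rw [abs_of_nonneg hx]; exact key x hx h0
  · rw [abs_of_neg hx]
    apply key (-x) (by linarith)
    rw [cheb_neg, h0]
    ring

private lemma row_formula {n : ℕ} (A : Matrix (Fin n) (Fin n) ℝ)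
    (hA : ∀ i j : Fin n,
      A i j = if i.val + 1 = j.val ∨ j.val + 1 = i.val then (1:ℝ)/2 else 0)
    (v : Fin n → ℝ) (i : Fin n) :
    A.mulVec v i = (1/2) * ((if h : 1 ≤ i.val then v ⟨i.val - 1, by omega⟩ else 0)
      + (if h : i.val + 1 < n then v ⟨i.val + 1, h⟩ else 0)) := by
  have expand : ∀ j : Fin n, A i j * v j =
      (if j.val + 1 = i.val then (1/2) * v j else 0)
      + (if i.val + 1 = j.val then (1/2) * v j else 0) := by
    intro j
    rw [hA]
    by_cases h1 : i.val + 1 = j.val <;> by_cases h2 : j.val + 1 = i.val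
    · omega
    · simp [h1, h2]
    · simp [h1, h2]
    · simp [h1, h2]
  have hmv : A.mulVec v i = ∑ j : Fin n, A i j * v j := rfl
  rw [hmv, Finset.sum_congr rfl (fun j _ => expand j), Finset.sum_add_distrib]
  have S1 : (∑ j : Fin n, if j.val + 1 = i.val then (1/2) * v j else 0)
      = (if h : 1 ≤ i.val then (1/2) * v ⟨i.val - 1, by omega⟩ else 0) := by
    split_ifs with h
    · rw [Finset.sum_eq_single_of_mem (⟨i.val - 1, by omega⟩ : Fin n) (Finset.mem_univ _)]
      · rw [if_pos (show (⟨i.val - 1, by omega⟩ : Fin n).val + 1 = i.val by simp; omega)]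
      · intro b _ hb
        rw [if_neg]
        intro hc
        exact hb (Fin.ext (by simp; omega))
    · apply Finset.sum_eq_zero
      intro j _
      rw [if_neg (by omega)]
  have S2 : (∑ j : Fin n, if i.val + 1 = j.val then (1/2) * v j else 0)
      = (if h : i.val + 1 < n then (1/2) * v ⟨i.val + 1, h⟩ else 0) := by
    split_ifs with h
    · rw [Finset.sum_eq_single_of_mem (⟨i.val + 1, h⟩ : Fin n) (Finset.mem_univ _)]
      · rw [if_pos rfl]
      · intro b _ hb
        rw [if_neg]
        intro hc
        exact hb (Fin.ext (by simp; omega))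
    · apply Finset.sum_eq_zero
      intro j _
      rw [if_neg (by omega)]
  rw [S1, S2]
  split_ifs <;> ring

private lemma eig_bound (n : ℕ) (hn : 1 ≤ n) (A : Matrix (Fin n) (Fin n) ℝ)
    (hA : ∀ i j : Fin n,
      A i j = if i.val + 1 = j.val ∨ j.val + 1 = i.val then (1:ℝ)/2 else 0)
    (μ : ℝ) (v : Fin n → ℝ) (hv : v ≠ 0) (heig : A.mulVec v = μ • v) :
    |μ| ≤ Real.cos (π / (n + 1)) := by
  set u : ℕ → ℝ := fun j => if h : 1 ≤ j ∧ j ≤ n then v ⟨j-1, by omega⟩ else 0 with hu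
  have hu0 : u 0 = 0 := by simp [hu]
  have huv : ∀ i : Fin n, u (i.val+1) = v i := by
    intro i
    simp only [hu]
    rw [dif_pos ⟨by omega, by omega⟩]
    congr 1
  have hrec : ∀ i : Fin n, u i.val + u (i.val+2) = 2*μ*u (i.val+1) := by
    intro i
    have h1 := congrFun heig i
    rw [row_formula A hA v i] at h1
    have ha : (if h : 1 ≤ i.val then v ⟨i.val-1, by omega⟩ else 0) = u i.val := by
      by_cases h : 1 ≤ i.val
      · rw [dif_pos h]; simp only [hu]; rw [dif_pos ⟨h, by omega⟩]
      · rw [dif_neg h]; simp only [hu]; rw [dif_neg (by omega)]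
    have hb : (if h : i.val+1 < n then v ⟨i.val+1, h⟩ else 0) = u (i.val+2) := by
      by_cases h : i.val + 1 < n
      · rw [dif_pos h]; simp only [hu]; rw [dif_pos ⟨by omega, by omega⟩]
        congr 1
      · rw [dif_neg h]; simp only [hu]; rw [dif_neg (by omega)]
    rw [ha, hb] at h1
    have h2 : (μ • v) i = μ * v i := rfl
    rw [h2, ← huv i] at h1
    linarith
  have main : ∀ j, j ≤ n + 1 → u j = u 1 * cheb μ j := by
    intro j
    induction j using Nat.twoStepInduction with
    | zero => intro _; simp [hu0, cheb]
    | one => intro _; simp [cheb]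
    | more j ih1 ih2 =>
      intro hj
      have hi : j < n := by omega
      have hr : u j + u (j+2) = 2*μ*u (j+1) := hrec ⟨j, hi⟩
      have ih1' := ih1 (by omega)
      have ih2' := ih2 (by omega)
      have hc : cheb μ (j+2) = 2*μ*cheb μ (j+1) - cheb μ j := rfl
      rw [hc]
      linear_combination hr - ih1' + 2*μ*ih2'
  have hu1 : u 1 ≠ 0 := by
    intro h
    apply hv
    funext i
    have h2 := main (i.val+1) (by omega)
    rw [h, zero_mul] at h2
    have h3 : (0 : Fin n → ℝ) i = 0 := rfl
    rw [h3, ← huv i]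
    exact h2
  have hun : u (n+1) = 0 := by simp only [hu]; rw [dif_neg (by omega)]
  have hroot : cheb μ (n+1) = 0 := by
    have h2 := main (n+1) le_rfl
    rw [hun] at h2
    rcases mul_eq_zero.mp h2.symm with h | h
    · exact absurd h hu1
    · exact h
  exact cheb_root_bound n hn μ hroot

/-- Every eigenvalue of the tridiagonal matrix with 1/2 on the off-diagonals has
absolute value strictly less than 1, and the spectral radius is cos(π/(n+1)). -/
theorem tridiagonal_spectral_radius (n : ℕ) (hn : 1 ≤ n)
    (A : Matrix (Fin n) (Fin n) ℝ)
    (hA : ∀ i j : Fin n,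
      A i j = if i.val + 1 = j.val ∨ j.val + 1 = i.val then (1:ℝ)/2 else 0) :
    (∀ (μ : ℝ) (v : Fin n → ℝ), v ≠ 0 → A.mulVec v = μ • v → |μ| < 1) ∧
    IsGreatest {r : ℝ | ∃ (μ : ℝ) (v : Fin n → ℝ),
        v ≠ 0 ∧ A.mulVec v = μ • v ∧ r = |μ|}
      (Real.cos (π / (n + 1))) := by
  have hn1 : (1:ℝ) ≤ (n:ℝ) := by exact_mod_cast hn
  have hθpos : 0 < π / ((n:ℝ)+1) := div_pos Real.pi_pos (by positivity)
  have hθle : π / ((n:ℝ)+1) ≤ π / 2 := by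
    apply div_le_div_of_nonneg_left Real.pi_pos.le (by norm_num)
    linarith
  have hθltpi : π / ((n:ℝ)+1) < π := by linarith [Real.pi_pos]
  have hcoslt1 : Real.cos (π / ((n:ℝ)+1)) < 1 := by
    have h := Real.cos_lt_cos_of_nonneg_of_le_pi (le_refl (0:ℝ)) hθltpi.le hθpos
    rwa [Real.cos_zero] at h
  refine ⟨?_, ?_, ?_⟩
  · intro μ v hv heig
    have := eig_bound n hn A hA μ v hv heig
    linarith
  · -- membership: explicit eigenvector
    have hsinθ : 0 < Real.sin (π / ((n:ℝ)+1)) :=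
      Real.sin_pos_of_pos_of_lt_pi hθpos hθltpi
    refine ⟨Real.cos (π / ((n:ℝ)+1)),
      fun i => Real.sin (((i.val+1 : ℕ):ℝ) * (π / ((n:ℝ)+1))), ?_, ?_, ?_⟩
    · intro h
      have h0 := congrFun h ⟨0, by omega⟩
      simp only [Pi.zero_apply] at h0
      norm_num at h0
      exact hsinθ.ne' h0
    · funext i
      rw [row_formula A hA _ i]
      have hsid : ∀ a : ℝ, Real.sin (a - π / ((n:ℝ)+1)) + Real.sin (a + π / ((n:ℝ)+1))
          = 2 * Real.cos (π / ((n:ℝ)+1)) * Real.sin a := by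
        intro a; rw [Real.sin_sub, Real.sin_add]; ring
      have ha : (if h : 1 ≤ i.val then
          Real.sin ((((⟨i.val - 1, by omega⟩ : Fin n).val + 1 : ℕ):ℝ) * (π / ((n:ℝ)+1))) else 0)
          = Real.sin (((i.val : ℕ):ℝ) * (π / ((n:ℝ)+1))) := by
        by_cases h : 1 ≤ i.val
        · rw [dif_pos h]
          congr 2
          have : (⟨i.val - 1, by omega⟩ : Fin n).val + 1 = i.val := by simp; omega
          rw [this]
        · rw [dif_neg h]
          have : i.val = 0 := by omega
          rw [this]
          simp
      have hb : (if h : i.val + 1 < n then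
          Real.sin ((((⟨i.val + 1, h⟩ : Fin n).val + 1 : ℕ):ℝ) * (π / ((n:ℝ)+1))) else 0)
          = Real.sin (((i.val + 2 : ℕ):ℝ) * (π / ((n:ℝ)+1))) := by
        by_cases h : i.val + 1 < n
        · rw [dif_pos h]
        · rw [dif_neg h]
          have h2 : i.val + 2 = n + 1 := by omega
          rw [h2]
          have h3 : (((n + 1 : ℕ)):ℝ) * (π / ((n:ℝ)+1)) = π := by
            push_cast
            field_simp
          rw [h3, Real.sin_pi]
      rw [ha, hb]
      have hid := hsid ((((i.val + 1 : ℕ)):ℝ) * (π / ((n:ℝ)+1)))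
      have e1 : (((i.val + 1 : ℕ)):ℝ) * (π / ((n:ℝ)+1)) - π / ((n:ℝ)+1)
          = (((i.val : ℕ)):ℝ) * (π / ((n:ℝ)+1)) := by push_cast; ring
      have e2 : (((i.val + 1 : ℕ)):ℝ) * (π / ((n:ℝ)+1)) + π / ((n:ℝ)+1)
          = (((i.val + 2 : ℕ)):ℝ) * (π / ((n:ℝ)+1)) := by push_cast; ring
      rw [e1, e2] at hid
      have hsmul : (Real.cos (π / ((n:ℝ)+1)) •
          fun i : Fin n => Real.sin (((i.val+1 : ℕ):ℝ) * (π / ((n:ℝ)+1)))) i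
          = Real.cos (π / ((n:ℝ)+1)) * Real.sin (((i.val+1 : ℕ):ℝ) * (π / ((n:ℝ)+1))) := rfl
      rw [hsmul]
      linarith
    · have hcnn : 0 ≤ Real.cos (π / ((n:ℝ)+1)) :=
        Real.cos_nonneg_of_mem_Icc ⟨by linarith, hθle⟩
      rw [abs_of_nonneg hcnn]
  · rintro r ⟨μ, v, hv, heig, rfl⟩
    exact eig_bound n hn A hA μ v hv heig
end

section
/- Consider the affine recursion y(t+1) = A y(t) + b(t) on ℝ^m, where A is the tridiagonal matrix with 1/2 on off-diagonals and b(t) = (x(t)/2, 0, …, 0, (1−x(t))/2)ᵀ for an arbitrary real sequence x(t). Then the quantity y_1(t) + y_m(t) evolves autonomously of the sequence x(t): explicitly, y_1(t) + y_m(t) = 1 − (2/(m+1)) Σ_{i=1}^{⌈m/2⌉} f_{2i−1}(y(0)) λ_{2i−1}^t, where λ_k = cos(πk/(m+1)), v_k is the orthonormal eigenvector of A for λ_k, and f_k(y) = 1 + λ_k − 2·sqrt(1−λ_k²)·sqrt((m+1)/2)·v_kᵀ y. -/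
/-!
For odd `k` the sine vector `v_k j = sin (π k (j + 1) / (m + 1))` is an eigenvector of `A` for
`λ_k = cos (π k / (m + 1))`, and it takes the same value `sin (π k / (m + 1))` at both ends of
the path, so its pairing with `b t` is `sin (π k / (m + 1)) / 2` whatever `x t` is. Hence
`u_k t = 2 sin (π k / (m + 1)) ⟪v_k, y t⟫` obeys the autonomous affine recursion
`u_k (t + 1) = λ_k u_k t + (1 - λ_k ^ 2)`, whose fixed point is `1 + λ_k`. The endpoint sum is
read off the odd modes through
`∑_{k odd} 2 sin (π k / (m + 1)) v_k = (m + 1) / 2 • (e_first + e_last)`,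
which product-to-sum formulas reduce to the Dirichlet-type sums
`2 sin x ∑_{i < M} cos ((2 i + 1) x) = sin (2 M x)`.
-/

open Real Finset Matrix

theorem affine_recurrence_eq {R : Type*} [CommRing R] {a : ℕ → R} {r p : R}
    (h : ∀ t, a (t + 1) = r * a t + (1 - r) * p) (t : ℕ) : a t = p + r ^ t * (a 0 - p) := by
  induction t with
  | zero => ring
  | succ t ih => rw [h, ih]; ring

theorem Nat.cast_add_one_div_two {K : Type*} [Field K] [CharZero K] (m : ℕ) :
    (((m + 1) / 2 : ℕ) : K) = if Even m then (m : K) / 2 else ((m : K) + 1) / 2 := by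
  rcases Nat.even_or_odd' m with ⟨n, rfl | rfl⟩
  · rw [if_pos (even_two_mul n), show (2 * n + 1) / 2 = n by omega]
    push_cast; ring
  · rw [if_neg (Nat.not_even_two_mul_add_one n), show (2 * n + 1 + 1) / 2 = n + 1 by omega]
    push_cast; ring

theorem Finset.sum_Icc_one_two_mul_sub_one {M : Type*} [AddCommMonoid M] (n : ℕ) (f : ℕ → M) :
    ∑ i ∈ Icc 1 n, f (2 * i - 1) = ∑ i ∈ range n, f (2 * i + 1) := by
  induction n with
  | zero => simp
  | succ n ih =>
    rw [sum_Icc_succ_top (by omega), sum_range_succ, ih,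
      show 2 * (n + 1) - 1 = 2 * n + 1 by omega]

noncomputable def halfPathMatrix (m : ℕ) : Matrix (Fin m) (Fin m) ℝ :=
  Matrix.of fun i j => if i.val + 1 = j.val ∨ j.val + 1 = i.val then 1 / 2 else 0

theorem halfPathMatrix_transpose (m : ℕ) : (halfPathMatrix m)ᵀ = halfPathMatrix m := by
  ext i j
  simp only [halfPathMatrix, transpose_apply, of_apply, or_comm]

/-- Extending a vector by zeros at the fictitious sites `0` and `m + 1` makes every row of the
matrix, boundary rows included, an average of the two neighbours. -/
theorem halfPathMatrix_mulVec_apply {m : ℕ} (f : ℝ → ℝ) (h₀ : f 0 = 0)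
    (hm : f (m + 1) = 0) (l : Fin m) :
    (halfPathMatrix m *ᵥ fun j => f ((j : ℕ) + 1)) l = (f l + f (l + 2)) / 2 := by
  set c : ℕ → ℝ := fun p => if p = l ∨ p = l + 2 then f p / 2 else 0
  have hc : ∀ j : Fin m, halfPathMatrix m l j * f ((j : ℕ) + 1) = c (j + 1) := by
    intro j
    simp only [halfPathMatrix, of_apply, c]
    push_cast
    split_ifs <;> first | omega | ring
  calc (halfPathMatrix m *ᵥ fun j => f ((j : ℕ) + 1)) l
      = ∑ p ∈ range (m + 2), c p := by
        rw [mulVec, dotProduct, Finset.sum_congr rfl fun j _ => hc j,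
          Fin.sum_univ_eq_sum_range (fun j => c (j + 1)), sum_range_succ, sum_range_succ']
        simp [c, h₀, hm]
    _ = c l + c (l + 2) :=
        sum_eq_add_of_mem _ _ (by simp; omega) (by simp) (by omega)
          fun p _ hp => if_neg (by omega)
    _ = (f l + f (l + 2)) / 2 := by simp [c]; ring

/-- The eigenvector `v_k` of the paper, without its normalising factor `√(2 / (m + 1))`. -/
noncomputable def sineMode (m k : ℕ) : Fin m → ℝ :=
  fun j => sin (π * k * ((j : ℕ) + 1) / (m + 1))

theorem halfPathMatrix_mulVec_sineMode (m k : ℕ) :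
    halfPathMatrix m *ᵥ sineMode m k = cos (π * k / (m + 1)) • sineMode m k := by
  ext l
  have hm : sin (π * k * ((m : ℝ) + 1) / (m + 1)) = 0 := by
    rw [mul_div_assoc, div_self (by positivity), mul_one, mul_comm]
    exact sin_nat_mul_pi k
  refine (halfPathMatrix_mulVec_apply (fun p => sin (π * k * p / (m + 1))) (by simp) hm l).trans
    ?_
  simp only [Pi.smul_apply, smul_eq_mul, sineMode]
  set a := π * k * ((l : ℕ) + 1) / (m + 1)
  set x := π * k / (m + 1)
  have h₁ : π * k * (l : ℕ) / (m + 1) = a - x := by ring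
  have h₂ : π * k * ((l : ℕ) + 2) / (m + 1) = a + x := by ring
  rw [h₁, h₂, sin_sub, sin_add]
  ring

theorem sineMode_dotProduct_halfPathMatrix_mulVec (m k : ℕ) (v : Fin m → ℝ) :
    sineMode m k ⬝ᵥ (halfPathMatrix m *ᵥ v)
      = cos (π * k / (m + 1)) * (sineMode m k ⬝ᵥ v) := by
  rw [dotProduct_mulVec, ← mulVec_transpose, halfPathMatrix_transpose,
    halfPathMatrix_mulVec_sineMode, smul_dotProduct, smul_eq_mul]

theorem sineMode_dotProduct_endpoints {m k : ℕ} (hm : 0 < m) (hk : Odd k) (p q : ℝ) :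
    sineMode m k ⬝ᵥ (Pi.single ⟨0, hm⟩ p + Pi.single ⟨m - 1, by omega⟩ q)
      = sin (π * k / (m + 1)) * (p + q) := by
  have hlast : sin (π * k * (((m - 1 : ℕ) : ℝ) + 1) / (m + 1)) = sin (π * k / (m + 1)) := by
    rw [Nat.cast_sub (by omega), Nat.cast_one, sub_add_cancel,
      show π * k * m / (m + 1) = k * π - π * k / (m + 1) by field_simp; ring,
      sin_nat_mul_pi_sub, hk.neg_one_pow]
    ring
  simp only [dotProduct_add, dotProduct_single, sineMode, hlast, CharP.cast_eq_zero, zero_add,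
    mul_one]
  ring

theorem two_sin_mul_sineMode_dotProduct_eq {m k : ℕ} (hm : 0 < m) (hk : Odd k)
    (x : ℕ → ℝ) {y : ℕ → Fin m → ℝ}
    (hy : ∀ t, y (t + 1) = halfPathMatrix m *ᵥ y t
      + (Pi.single ⟨0, hm⟩ (x t / 2) + Pi.single ⟨m - 1, by omega⟩ ((1 - x t) / 2)))
    (t : ℕ) :
    2 * sin (π * k / (m + 1)) * (sineMode m k ⬝ᵥ y t)
      = 1 + cos (π * k / (m + 1)) + cos (π * k / (m + 1)) ^ t
        * (2 * sin (π * k / (m + 1)) * (sineMode m k ⬝ᵥ y 0)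
          - (1 + cos (π * k / (m + 1)))) := by
  refine affine_recurrence_eq (a := fun t => 2 * sin (π * k / (m + 1)) * (sineMode m k ⬝ᵥ y t))
    (fun t => ?_) t
  rw [hy, dotProduct_add, sineMode_dotProduct_halfPathMatrix_mulVec,
    sineMode_dotProduct_endpoints hm hk]
  linear_combination sin_sq_add_cos_sq (π * k / (m + 1))

noncomputable def oddCosSum (M : ℕ) (x : ℝ) : ℝ := ∑ i ∈ range M, cos ((2 * i + 1) * x)

theorem two_mul_sin_mul_oddCosSum (M : ℕ) (x : ℝ) :
    2 * sin x * oddCosSum M x = sin (2 * M * x) := by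
  induction M with
  | zero => simp [oddCosSum]
  | succ M ih =>
    rw [oddCosSum, sum_range_succ, mul_add, ← oddCosSum, ih, two_mul_sin_mul_cos,
      show x - (2 * M + 1) * x = -(2 * M * x) by ring, sin_neg]
    push_cast
    ring_nf

/-- In `two_mul_sin_mul_oddCosSum` the angle `2 ((m + 1) / 2) π r / (m + 1)` is
`r π - π r / (m + 1)` for even `m` and `r π` for odd `m`. -/
theorem oddCosSum_eq_of_le {m r : ℕ} (hr : 1 ≤ r) (hrm : r ≤ m) :
    oddCosSum ((m + 1) / 2) (π * r / (m + 1)) = if Even m then -(-1) ^ r / 2 else 0 := by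
  have hs : sin (π * r / (m + 1)) ≠ 0 := by
    refine (sin_pos_of_pos_of_lt_pi (by positivity) ?_).ne'
    rw [div_lt_iff₀ (by positivity)]
    have : (r : ℝ) < m + 1 := by exact_mod_cast Nat.lt_succ_of_le hrm
    nlinarith [pi_pos]
  have key := two_mul_sin_mul_oddCosSum ((m + 1) / 2) (π * r / (m + 1))
  apply mul_left_cancel₀ hs
  rcases Nat.even_or_odd' m with ⟨n, rfl | rfl⟩
  · rw [if_pos (even_two_mul n), show (2 * n + 1) / 2 = n by omega,
      show 2 * (n : ℝ) * (π * r / ((2 * n : ℕ) + 1)) = r * π - π * r / ((2 * n : ℕ) + 1) by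
        push_cast; field_simp; ring,
      sin_nat_mul_pi_sub] at *
    linear_combination key / 2
  · rw [if_neg (Nat.not_even_two_mul_add_one n), show (2 * n + 1 + 1) / 2 = n + 1 by omega,
      show 2 * ((n + 1 : ℕ) : ℝ) * (π * r / ((2 * n + 1 : ℕ) + 1)) = r * π by
        push_cast; field_simp; ring,
      sin_nat_mul_pi] at *
    linear_combination key / 2

theorem oddCosSum_sub_oddCosSum {m j : ℕ} (hm : 1 < m) (hj : j < m) :
    oddCosSum ((m + 1) / 2) (π * j / (m + 1))
        - oddCosSum ((m + 1) / 2) (π * (j + 2 : ℕ) / (m + 1))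
      = (m + 1) / 2 * ((if j = 0 then 1 else 0) + (if j = m - 1 then 1 else 0)) := by
  set M := (m + 1) / 2
  have hbot : oddCosSum M (π * (0 : ℕ) / (m + 1)) = M := by simp [oddCosSum]
  have htop : oddCosSum M (π * (m - 1 + 2 : ℕ) / (m + 1)) = -M := by
    have : ∀ i : ℕ, (2 * i + 1) * (π * (m - 1 + 2 : ℕ) / (m + 1)) = i * (2 * π) + π := by
      intro i
      rw [show m - 1 + 2 = m + 1 by omega]
      push_cast; field_simp
    simp only [oddCosSum, this, cos_nat_mul_two_pi_add_pi]
    simp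
  have hM := Nat.cast_add_one_div_two (K := ℝ) m
  by_cases h0 : j = 0
  · subst h0
    rw [hbot, oddCosSum_eq_of_le (by norm_num) hm, hM, if_pos rfl,
      if_neg (show 0 ≠ m - 1 by omega)]
    split_ifs <;> ring
  by_cases h1 : j = m - 1
  · subst h1
    rw [htop, oddCosSum_eq_of_le (by omega) (by omega), hM, if_neg h0, if_pos rfl]
    split_ifs with he
    · have : Odd (m - 1) := by rcases he with ⟨n, rfl⟩; exact ⟨n - 1, by omega⟩
      rw [this.neg_one_pow]; ring
    · ring
  rw [oddCosSum_eq_of_le (by omega) (by omega), oddCosSum_eq_of_le (by omega) (by omega),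
    if_neg h0, if_neg h1]
  split_ifs <;> ring

theorem sum_two_sin_smul_sineMode {m : ℕ} (hm : 1 < m) :
    ∑ i ∈ range ((m + 1) / 2),
        (2 * sin (π * (2 * i + 1 : ℕ) / (m + 1))) • sineMode m (2 * i + 1)
      = ((m + 1) / 2 : ℝ)
        • (Pi.single ⟨0, by omega⟩ 1 + Pi.single ⟨m - 1, by omega⟩ 1) := by
  ext j
  have hterm : ∀ i : ℕ, 2 * sin (π * (2 * i + 1 : ℕ) / (m + 1)) * sineMode m (2 * i + 1) j
      = cos ((2 * i + 1) * (π * (j : ℕ) / (m + 1)))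
        - cos ((2 * i + 1) * (π * ((j : ℕ) + 2 : ℕ) / (m + 1))) := by
    intro i
    rw [sineMode, two_mul_sin_mul_sin, ← cos_neg (_ - _)]
    congr 2 <;> push_cast <;> ring
  simp only [Finset.sum_apply, Pi.smul_apply, smul_eq_mul, hterm, sum_sub_distrib]
  exact (oddCosSum_sub_oddCosSum hm j.isLt).trans (by simp [Pi.single_apply, Fin.ext_iff])

theorem sum_Icc_two_sin_mul_sineMode_dotProduct {m : ℕ} (hm : 1 < m) (y : Fin m → ℝ) :
    ∑ i ∈ Icc 1 ((m + 1) / 2),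
        2 * sin (π * (2 * i - 1 : ℕ) / (m + 1)) * (sineMode m (2 * i - 1) ⬝ᵥ y)
      = (m + 1) / 2 * (y ⟨0, by omega⟩ + y ⟨m - 1, by omega⟩) := by
  rw [sum_Icc_one_two_mul_sub_one _ fun k => 2 * sin (π * k / (m + 1)) * (sineMode m k ⬝ᵥ y)]
  simp only [← smul_eq_mul (a := 2 * sin _), ← smul_dotProduct, ← sum_dotProduct,
    sum_two_sin_smul_sineMode hm]
  rw [smul_dotProduct, add_dotProduct, single_dotProduct, single_dotProduct, smul_eq_mul]
  ring

theorem sum_Icc_one_add_cos_odd {m : ℕ} (hm : 1 ≤ m) :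
    ∑ i ∈ Icc 1 ((m + 1) / 2), (1 + cos (π * (2 * i - 1 : ℕ) / (m + 1))) = (m + 1) / 2 := by
  have hcos : ∑ i ∈ range ((m + 1) / 2), cos (π * (2 * i + 1 : ℕ) / (m + 1))
      = oddCosSum ((m + 1) / 2) (π * (1 : ℕ) / (m + 1)) :=
    sum_congr rfl fun i _ => by push_cast; ring_nf
  rw [sum_Icc_one_two_mul_sub_one _ fun k => 1 + cos (π * k / (m + 1)), sum_add_distrib, hcos,
    oddCosSum_eq_of_le le_rfl hm, sum_const, card_range, nsmul_one, Nat.cast_add_one_div_two]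
  split_ifs <;> ring

theorem two_mul_sqrt_one_sub_cos_sq_mul_sum {m k : ℕ} (hk : k ≤ m + 1) (y : Fin m → ℝ) :
    2 * √(1 - cos (π * k / (m + 1)) ^ 2) * √((m + 1) / 2)
        * ∑ j : Fin m, (√(2 / (m + 1)) * sin (π * k * ((j : ℕ) + 1) / (m + 1))) * y j
      = 2 * sin (π * k / (m + 1)) * (sineMode m k ⬝ᵥ y) := by
  have hle : π * k / (m + 1) ≤ π := by
    rw [div_le_iff₀ (by positivity)]
    have : (k : ℝ) ≤ m + 1 := by exact_mod_cast hk
    nlinarith [pi_pos]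
  have hsqrt : √(((m : ℝ) + 1) / 2) * √(2 / ((m : ℝ) + 1)) = 1 := by
    rw [← sqrt_mul (by positivity), div_mul_div_comm, mul_comm, div_self (by positivity),
      sqrt_one]
  rw [← sin_eq_sqrt_one_sub_cos_sq (by positivity) hle, dotProduct]
  simp only [sineMode, mul_assoc, ← mul_sum]
  rw [← mul_assoc √_, hsqrt, one_mul]

theorem mode_term_mul_cos_pow_eq {m k : ℕ} (hm : 0 < m) (hk : Odd k) (hkm : k ≤ m + 1)
    (x : ℕ → ℝ) {y : ℕ → Fin m → ℝ}
    (hy : ∀ t, y (t + 1) = halfPathMatrix m *ᵥ y t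
      + (Pi.single ⟨0, hm⟩ (x t / 2) + Pi.single ⟨m - 1, by omega⟩ ((1 - x t) / 2)))
    (t : ℕ) :
    (1 + cos (π * k / (m + 1)) - 2 * √(1 - cos (π * k / (m + 1)) ^ 2) * √((m + 1) / 2)
        * ∑ j : Fin m, (√(2 / (m + 1)) * sin (π * k * ((j : ℕ) + 1) / (m + 1))) * y 0 j)
        * cos (π * k / (m + 1)) ^ t
      = 1 + cos (π * k / (m + 1)) - 2 * sin (π * k / (m + 1)) * (sineMode m k ⬝ᵥ y t) := by
  rw [two_mul_sqrt_one_sub_cos_sq_mul_sum hkm]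
  linear_combination two_sin_mul_sineMode_dotProduct_eq hm hk x hy t

/-- For the affine recursion y(t+1) = A y(t) + b(t) with A tridiagonal (1/2 on
off-diagonals) and b(t) = (x(t)/2, 0, …, 0, (1−x(t))/2)ᵀ, the quantity
y_1(t) + y_m(t) evolves autonomously of x(t):
y_1(t) + y_m(t) = 1 − (2/(m+1)) Σ_{i=1}^{⌈m/2⌉} f_{2i−1}(y(0)) λ_{2i−1}^t. -/
theorem blossom_loop_endpoint_sum (m : ℕ) (hm : 2 ≤ m)
    (A : Matrix (Fin m) (Fin m) ℝ)
    (hA : ∀ i j : Fin m,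
      A i j = if i.val + 1 = j.val ∨ j.val + 1 = i.val then (1:ℝ)/2 else 0)
    (x : ℕ → ℝ) (b : ℕ → Fin m → ℝ)
    (hb : ∀ t (i : Fin m),
      b t i = if i.val = 0 then x t / 2
        else if i.val = m - 1 then (1 - x t) / 2 else 0)
    (y : ℕ → Fin m → ℝ)
    (hy : ∀ t, y (t + 1) = A.mulVec (y t) + b t) :
    ∀ t : ℕ,
      y t ⟨0, by omega⟩ + y t ⟨m - 1, by omega⟩
        = 1 - (2 / (m + 1 : ℝ)) *
            ∑ i ∈ Finset.Icc 1 ((m + 1) / 2),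
              (1 + Real.cos (π * (2 * i - 1 : ℕ) / (m + 1))
                - 2 * Real.sqrt (1 - Real.cos (π * (2 * i - 1 : ℕ) / (m + 1)) ^ 2)
                  * Real.sqrt ((m + 1) / 2)
                  * ∑ j : Fin m,
                      (Real.sqrt (2 / (m + 1))
                        * Real.sin (π * (2 * i - 1 : ℕ) * (j.val + 1) / (m + 1)))
                      * y 0 j)
              * Real.cos (π * (2 * i - 1 : ℕ) / (m + 1)) ^ t := by
  obtain rfl : A = halfPathMatrix m := Matrix.ext hA
  have hb' : ∀ t, b t = Pi.single ⟨0, by omega⟩ (x t / 2)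
      + Pi.single ⟨m - 1, by omega⟩ ((1 - x t) / 2) := by
    intro t
    ext i
    simp only [hb, Pi.add_apply, Pi.single_apply, Fin.ext_iff]
    split_ifs <;> first | omega | ring
  intro t
  rw [sum_congr rfl fun i hi =>
      mode_term_mul_cos_pow_eq (by omega) (Nat.odd_iff.2 (by simp at hi; omega))
        (by simp at hi; omega) x (fun t => (hy t).trans (by rw [hb' t])) t,
    sum_sub_distrib, sum_Icc_one_add_cos_odd (by omega),
    sum_Icc_two_sin_mul_sineMode_dotProduct hm]
  field_simp
  ring
end

section
/- Every eigenvalue of the (n+m)×(n+m) blossom matrix A has absolute value strictly less than 1; hence the iteration x(t+1) = A x(t) + b converges to (I − A)^{-1} b for every initial condition. -/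
open Filter

noncomputable def blossomW (N n : ℕ) : ℕ → ℕ → ℝ
  | 0, _ => 1
  | (k+1), i =>
      if i = 0 then blossomW N n k 1 / 2
      else if i = N - 1 then (blossomW N n k (N - 2) + blossomW N n k (n - 1)) / 2
      else (blossomW N n k (i - 1) + blossomW N n k (i + 1)) / 2

lemma blossomW_nonneg (N n : ℕ) : ∀ k i, 0 ≤ blossomW N n k i := by
  intro k
  induction k with
  | zero => intro i; simp [blossomW]
  | succ k ih =>
      intro i
      simp only [blossomW]
      split_ifs
      · linarith [ih 1]
      · linarith [ih (N - 2), ih (n - 1)]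
      · linarith [ih (i - 1), ih (i + 1)]

lemma blossomW_le_one (N n : ℕ) : ∀ k i, blossomW N n k i ≤ 1 := by
  intro k
  induction k with
  | zero => intro i; simp [blossomW]
  | succ k ih =>
      intro i
      simp only [blossomW]
      split_ifs
      · linarith [ih 1, blossomW_nonneg N n k 1]
      · linarith [ih (N - 2), ih (n - 1)]
      · linarith [ih (i - 1), ih (i + 1)]

lemma blossomW_lt_one (N n : ℕ) (hN : 2 ≤ N) (hn : 1 ≤ n) (hnN : n < N) :
    ∀ k i, i < N → i < k → blossomW N n k i < 1 := by
  intro k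
  induction k with
  | zero => intro i _ h; omega
  | succ k ih =>
      intro i hiN hik
      simp only [blossomW]
      split_ifs with h0 hlast
      · linarith [blossomW_le_one N n k 1, blossomW_nonneg N n k 1]
      · have h1 : n - 1 < N := by omega
        have h2 : n - 1 < k := by omega
        linarith [blossomW_le_one N n k (N - 2), ih (n - 1) h1 h2]
      · have h1 : i - 1 < N := by omega
        have h2 : i - 1 < k := by omega
        linarith [blossomW_le_one N n k (i + 1), ih (i - 1) h1 h2]

/-- Every eigenvalue of the blossom matrix has absolute value strictly less than
1; hence the iteration x(t+1) = A x(t) + b converges to (I − A)⁻¹ b for every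
initial condition. -/
theorem blossom_stability (n m : ℕ) (hn : 1 ≤ n) (hm : 1 ≤ m)
    (A : Matrix (Fin (n + m)) (Fin (n + m)) ℝ)
    (hA : ∀ v : Fin (n + m) → ℝ,
      (A.mulVec v ⟨0, by omega⟩ = v ⟨1, by omega⟩ / 2) ∧
      (∀ i : ℕ, ∀ _h1 : 0 < i, ∀ _h2 : i < n + m - 1,
        A.mulVec v ⟨i, by omega⟩
          = (v ⟨i - 1, by omega⟩ + v ⟨i + 1, by omega⟩) / 2) ∧
      (A.mulVec v ⟨n + m - 1, by omega⟩
        = (v ⟨n + m - 2, by omega⟩ - v ⟨n - 1, by omega⟩) / 2))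
    (b : Fin (n + m) → ℝ) :
    (∀ (μ : ℝ) (v : Fin (n + m) → ℝ), v ≠ 0 → A.mulVec v = μ • v → |μ| < 1) ∧
    (∀ x : ℕ → Fin (n + m) → ℝ,
      (∀ t, x (t + 1) = A.mulVec (x t) + b) →
      Tendsto x atTop (nhds ((1 - A)⁻¹.mulVec b))) := by
  have hN2 : 2 ≤ n + m := by omega
  set f : (Fin (n + m) → ℝ) → (Fin (n + m) → ℝ) := A.mulVec with hfdef
  -- key pointwise bound for iterates
  have key : ∀ (k : ℕ) (v : Fin (n + m) → ℝ) (i : ℕ) (hi : i < n + m),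
      |(f^[k] v) ⟨i, hi⟩| ≤ blossomW (n + m) n k i * ‖v‖ := by
    intro k
    induction k with
    | zero =>
        intro v i hi
        simpa [blossomW, Real.norm_eq_abs] using norm_le_pi_norm v ⟨i, hi⟩
    | succ k ih =>
        intro v i hi
        rw [Function.iterate_succ_apply']
        set u := f^[k] v with hu
        obtain ⟨h0, hmid, hlast⟩ := hA u
        rw [hfdef] at h0 hmid hlast
        have hv0 : (0:ℝ) ≤ ‖v‖ := norm_nonneg v
        rcases Nat.eq_zero_or_pos i with h | hpos
        · subst h
          have hb := ih v 1 (by omega)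
          rw [show f u ⟨0, hi⟩ = u ⟨1, by omega⟩ / 2 from h0]
          simp only [blossomW, if_pos rfl]
          rw [abs_div, abs_two]
          calc |u ⟨1, by omega⟩| / 2 ≤ (blossomW (n + m) n k 1 * ‖v‖) / 2 := by
                rw [hu]; linarith [hb]
            _ = blossomW (n + m) n k 1 / 2 * ‖v‖ := by ring
        · rcases eq_or_ne i (n + m - 1) with h | h
          · subst h
            rw [show f u ⟨n + m - 1, hi⟩ = (u ⟨n + m - 2, by omega⟩ - u ⟨n - 1, by omega⟩) / 2 from hlast]
            simp only [blossomW, if_neg (by omega : ¬ (n + m - 1 = 0)), if_pos rfl]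
            have i1 := ih v (n + m - 2) (by omega)
            have i2 := ih v (n - 1) (by omega)
            have habs : |u ⟨n + m - 2, by omega⟩ - u ⟨n - 1, by omega⟩|
                ≤ |u ⟨n + m - 2, by omega⟩| + |u ⟨n - 1, by omega⟩| := abs_sub _ _
            rw [abs_div, abs_two]
            calc |u ⟨n + m - 2, by omega⟩ - u ⟨n - 1, by omega⟩| / 2
                ≤ (blossomW (n + m) n k (n + m - 2) * ‖v‖
                    + blossomW (n + m) n k (n - 1) * ‖v‖) / 2 := by
                  rw [hu] at habs ⊢; linarith [i1, i2, habs]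
              _ = (blossomW (n + m) n k (n + m - 2) + blossomW (n + m) n k (n - 1)) / 2 * ‖v‖ := by
                  ring
          · have hiN1 : i < n + m - 1 := by omega
            rw [show f u ⟨i, hi⟩ = (u ⟨i - 1, by omega⟩ + u ⟨i + 1, by omega⟩) / 2 from hmid i hpos hiN1]
            simp only [blossomW, if_neg (by omega : ¬ i = 0), if_neg h]
            have i1 := ih v (i - 1) (by omega)
            have i2 := ih v (i + 1) (by omega)
            have habs : |u ⟨i - 1, by omega⟩ + u ⟨i + 1, by omega⟩|
                ≤ |u ⟨i - 1, by omega⟩| + |u ⟨i + 1, by omega⟩| := abs_add_le _ _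
            rw [abs_div, abs_two]
            calc |u ⟨i - 1, by omega⟩ + u ⟨i + 1, by omega⟩| / 2
                ≤ (blossomW (n + m) n k (i - 1) * ‖v‖
                    + blossomW (n + m) n k (i + 1) * ‖v‖) / 2 := by
                  rw [hu] at habs ⊢; linarith [i1, i2, habs]
              _ = (blossomW (n + m) n k (i - 1) + blossomW (n + m) n k (i + 1)) / 2 * ‖v‖ := by
                  ring
  haveI : Nonempty (Fin (n + m)) := ⟨⟨0, by omega⟩⟩
  set c : ℝ := Finset.univ.sup' Finset.univ_nonempty
      (fun i : Fin (n + m) => blossomW (n + m) n (n + m) i.val) with hc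
  have hc0 : 0 ≤ c := by
    refine le_trans (blossomW_nonneg (n + m) n (n + m) 0) ?_
    exact Finset.le_sup' (fun i : Fin (n + m) => blossomW (n + m) n (n + m) i.val)
      (Finset.mem_univ (⟨0, by omega⟩ : Fin (n + m)))
  have hc1 : c < 1 := by
    rw [hc, Finset.sup'_lt_iff]
    intro i _
    exact blossomW_lt_one (n + m) n hN2 hn (by omega) (n + m) i.val i.isLt i.isLt
  have hcontr : ∀ v : Fin (n + m) → ℝ, ‖f^[n + m] v‖ ≤ c * ‖v‖ := by
    intro v
    rw [pi_norm_le_iff_of_nonneg (mul_nonneg hc0 (norm_nonneg v))]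
    intro i
    rw [Real.norm_eq_abs]
    calc |(f^[n + m] v) i| = |(f^[n + m] v) ⟨i.val, i.isLt⟩| := rfl
      _ ≤ blossomW (n + m) n (n + m) i.val * ‖v‖ := key (n + m) v i.val i.isLt
      _ ≤ c * ‖v‖ := by
          refine mul_le_mul_of_nonneg_right ?_ (norm_nonneg v)
          exact Finset.le_sup' (fun j : Fin (n + m) => blossomW (n + m) n (n + m) j.val)
            (Finset.mem_univ i)
  -- Part 1
  have part1 : ∀ (μ : ℝ) (v : Fin (n + m) → ℝ), v ≠ 0 → A.mulVec v = μ • v → |μ| < 1 := by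
    intro μ v hv hev
    have hiter : ∀ k, f^[k] v = μ ^ k • v := by
      intro k
      induction k with
      | zero => simp
      | succ k ih =>
          rw [Function.iterate_succ_apply', ih]
          rw [show f (μ ^ k • v) = A.mulVec (μ ^ k • v) from rfl]
          rw [Matrix.mulVec_smul, hev, smul_smul, pow_succ]
    have h1 : ‖f^[n + m] v‖ = |μ| ^ (n + m) * ‖v‖ := by
      rw [hiter (n + m), norm_smul, Real.norm_eq_abs, abs_pow]
    have h2 := hcontr v
    rw [h1] at h2
    have hvpos : 0 < ‖v‖ := norm_pos_iff.mpr hv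
    have h3 : |μ| ^ (n + m) ≤ c := le_of_mul_le_mul_right h2 hvpos
    by_contra hcon
    push_neg at hcon
    have : (1:ℝ) ≤ |μ| ^ (n + m) := one_le_pow₀ hcon
    linarith
  refine ⟨part1, ?_⟩
  -- Part 2
  intro x hx
  have hdet : (1 - A).det ≠ 0 := by
    intro hd
    obtain ⟨v, hv0, hv⟩ := (Matrix.exists_mulVec_eq_zero_iff).mpr hd
    have hAv : A.mulVec v = (1:ℝ) • v := by
      rw [Matrix.sub_mulVec, Matrix.one_mulVec, sub_eq_zero] at hv
      rw [← hv, one_smul]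
    have := part1 1 v hv0 hAv
    simp at this
  have hunit : IsUnit (1 - A).det := isUnit_iff_ne_zero.mpr hdet
  set xs : Fin (n + m) → ℝ := (1 - A)⁻¹.mulVec b with hxs
  have hfix : b = xs - A.mulVec xs := by
    have h2 : (1 - A).mulVec xs = b := by
      rw [hxs, Matrix.mulVec_mulVec, Matrix.mul_nonsing_inv _ hunit, Matrix.one_mulVec]
    rw [Matrix.sub_mulVec, Matrix.one_mulVec] at h2
    exact h2.symm
  have he : ∀ t, x t - xs = f^[t] (x 0 - xs) := by
    intro t
    induction t with
    | zero => simp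
    | succ t ih =>
        have hsub : f (x t - xs) = A.mulVec (x t) - A.mulVec xs := Matrix.mulVec_sub A _ _
        rw [Function.iterate_succ_apply', ← ih, hx t, hsub, hfix]
        abel
  have hq : ∀ (q : ℕ) (u : Fin (n + m) → ℝ), ‖f^[(n + m) * q] u‖ ≤ c ^ q * ‖u‖ := by
    intro q
    induction q with
    | zero => intro u; simp
    | succ q ih =>
        intro u
        have hmul : (n + m) * (q + 1) = (n + m) + (n + m) * q := by ring
        rw [hmul, Function.iterate_add_apply]
        calc ‖f^[n + m] (f^[(n + m) * q] u)‖ ≤ c * ‖f^[(n + m) * q] u‖ := hcontr _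
          _ ≤ c * (c ^ q * ‖u‖) := mul_le_mul_of_nonneg_left (ih u) hc0
          _ = c ^ (q + 1) * ‖u‖ := by ring
  set e0 : Fin (n + m) → ℝ := x 0 - xs with he0
  set M : ℝ := (Finset.range (n + m)).sup' ⟨0, Finset.mem_range.mpr (by omega)⟩
      (fun r => ‖f^[r] e0‖) with hM
  have hMle : ∀ r, r < n + m → ‖f^[r] e0‖ ≤ M := by
    intro r hr
    exact Finset.le_sup' (fun s => ‖f^[s] e0‖) (Finset.mem_range.mpr hr)
  have hM0 : 0 ≤ M := le_trans (norm_nonneg (f^[0] e0)) (hMle 0 (by omega))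
  have hbound : ∀ t, ‖x t - xs‖ ≤ c ^ (t / (n + m)) * M := by
    intro t
    rw [he t]
    have ht : t = (n + m) * (t / (n + m)) + t % (n + m) := (Nat.div_add_mod t (n + m)).symm
    calc ‖f^[t] e0‖ = ‖f^[(n + m) * (t / (n + m))] (f^[t % (n + m)] e0)‖ := by
          rw [← Function.iterate_add_apply, ← ht]
      _ ≤ c ^ (t / (n + m)) * ‖f^[t % (n + m)] e0‖ := hq _ _
      _ ≤ c ^ (t / (n + m)) * M :=
          mul_le_mul_of_nonneg_left (hMle _ (Nat.mod_lt t (by omega))) (pow_nonneg hc0 _)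
  have hdiv : Tendsto (fun t : ℕ => t / (n + m)) atTop atTop := by
    apply Filter.tendsto_atTop_atTop.2
    intro bb
    exact ⟨bb * (n + m), fun a ha => (Nat.le_div_iff_mul_le (by omega)).2 ha⟩
  have htendg : Tendsto (fun t : ℕ => c ^ (t / (n + m)) * M) atTop (nhds 0) := by
    have h1 : Tendsto (fun q : ℕ => c ^ q) atTop (nhds 0) :=
      tendsto_pow_atTop_nhds_zero_of_lt_one hc0 hc1
    have h2 := (h1.comp hdiv).mul_const M
    simpa using h2
  have hzero : Tendsto (fun t => x t - xs) atTop (nhds 0) :=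
    squeeze_zero_norm hbound htendg
  exact tendsto_sub_nhds_zero_iff.mp hzero
end

section
/- The spectral radius of the (n+m)×(n+m) blossom matrix A equals cos(π/(2n+m+1)) if m is even; cos(2π/(2n+m+1)) if m is odd and m ≤ 2n−1; and cos(π/(m+1)) if m is odd and m > 2n−1. -/
open Real

/-!
Both families of eigenvalues have the form `cos (π j / D)` with `0 < j < D`. Since
`cos (π - x) = -cos x` and `cos` decreases on `[0, π]`, the largest modulus in such a family is
attained at the `j` closest to `0` or to `D`. For `N = 2n + m + 1`, the first family (`j = 2k`,
`D = N`) thus peaks at `j = N - 1`, giving `cos (π / N)`, when `m` is even, and at `j = 2`, giving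
`cos (2π / N)`, when `m` is odd. The second family (`j = 2k - 1`, `D = m + 1`) is bounded by
`cos (π / (m + 1)) ≤ cos (π / N)` and attains this bound when `m` is odd. In the odd case the two
peaks compare according to `2 (m + 1) ≤ N`, that is `m ≤ 2n - 1`.
-/

theorem abs_cos_le_cos_of_le_of_add_le_pi {a b : ℝ} (hb : 0 ≤ b) (hba : b ≤ a)
    (hab : a + b ≤ π) : |cos a| ≤ cos b := by
  rw [abs_le]
  constructor
  · have h := cos_le_cos_of_nonneg_of_le_pi hb (by linarith) (by linarith : b ≤ π - a)
    rw [cos_pi_sub] at h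
    linarith
  · exact cos_le_cos_of_nonneg_of_le_pi hb (by linarith) hba

theorem abs_cos_pi_mul_div_le {i j D : ℝ} (hD : 0 < D) (hi : 0 ≤ i) (hij : i ≤ j)
    (hijD : i + j ≤ D) : |cos (π * j / D)| ≤ cos (π * i / D) := by
  refine abs_cos_le_cos_of_le_of_add_le_pi (by positivity) (by gcongr) ?_
  rw [← add_div, ← mul_add, div_le_iff₀ hD]
  gcongr
  linarith

theorem abs_cos_pi_mul_div_eq_self {i D : ℝ} (hD : 0 < D) (hi : 0 ≤ i) (h : 2 * i ≤ D) :
    |cos (π * i / D)| = cos (π * i / D) :=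
  abs_eq_self.2 ((abs_nonneg _).trans (abs_cos_pi_mul_div_le hD hi le_rfl (by linarith)))

theorem abs_cos_pi_mul_div_eq_of_add_eq {i j D : ℝ} (hD : 0 < D) (hi : 0 ≤ i)
    (h : 2 * i ≤ D) (hij : i + j = D) : |cos (π * j / D)| = cos (π * i / D) := by
  have hj : π * j / D = π - π * i / D := by
    rw [eq_sub_iff_add_eq, ← add_div, ← mul_add, add_comm, hij, mul_div_cancel_right₀ _ hD.ne']
  rw [hj, cos_pi_sub, abs_neg, abs_cos_pi_mul_div_eq_self hD hi h]

theorem cos_pi_div_le_cos_pi_div {a b : ℝ} (ha : 1 ≤ a) (hab : a ≤ b) :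
    cos (π / a) ≤ cos (π / b) :=
  cos_le_cos_of_nonneg_of_le_pi (div_nonneg pi_pos.le (by linarith))
    (div_le_self pi_pos.le ha) (by gcongr)

theorem cos_pi_div_le_cos_two_pi_div {a b : ℝ} (ha : 1 ≤ a) (hab : 2 * a ≤ b) :
    cos (π / a) ≤ cos (2 * π / b) := by
  rw [mul_comm, ← div_div_eq_mul_div]
  exact cos_pi_div_le_cos_pi_div ha (by linarith)

theorem cos_two_pi_div_le_cos_pi_div {a b : ℝ} (hb : 2 ≤ b) (hab : b ≤ 2 * a) :
    cos (2 * π / b) ≤ cos (π / a) := by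
  rw [mul_comm, ← div_div_eq_mul_div]
  exact cos_pi_div_le_cos_pi_div (by linarith) (by linarith)

theorem setOf_exists_and_eq_abs (p : ℝ → Prop) :
    {r : ℝ | ∃ μ, p μ ∧ r = |μ|} = (|·|) '' {μ | p μ} := by
  ext
  simp only [Set.mem_ofPred_eq, Set.mem_image, eq_comm]

section Families

variable {K : ℕ} {D : ℝ}

theorem isGreatest_abs_cos_two_pi_mul_div_of_eq_two_mul_add_one (hK : 1 ≤ K)
    (hD : 2 * K + 1 = D) :
    IsGreatest ((fun k : ℕ => |cos (2 * π * k / D)|) '' Set.Icc 1 K) (cos (π / D)) := by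
  have hK' : (1 : ℝ) ≤ K := by exact_mod_cast hK
  have hD0 : 0 < D := by rw [← hD]; positivity
  refine ⟨⟨K, ⟨hK, le_rfl⟩, ?_⟩, ?_⟩
  · simpa [mul_comm 2 π, mul_assoc] using
      abs_cos_pi_mul_div_eq_of_add_eq hD0 zero_le_one (j := 2 * K) (by linarith) (by linarith)
  · rintro _ ⟨k, ⟨hk1, hk2⟩, rfl⟩
    have hk1' : (1 : ℝ) ≤ k := by exact_mod_cast hk1
    have hk2' : (k : ℝ) ≤ K := by exact_mod_cast hk2
    simpa [mul_comm 2 π, mul_assoc] using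
      abs_cos_pi_mul_div_le hD0 zero_le_one (j := 2 * k) (by linarith) (by linarith)

theorem isGreatest_abs_cos_two_pi_mul_div_of_eq_two_mul_add_two (hK : 1 ≤ K)
    (hD : 2 * K + 2 = D) :
    IsGreatest ((fun k : ℕ => |cos (2 * π * k / D)|) '' Set.Icc 1 K) (cos (2 * π / D)) := by
  have hK' : (1 : ℝ) ≤ K := by exact_mod_cast hK
  have hD0 : 0 < D := by rw [← hD]; positivity
  refine ⟨⟨1, ⟨le_rfl, hK⟩, ?_⟩, ?_⟩
  · simpa [mul_comm 2 π] using abs_cos_pi_mul_div_eq_self hD0 zero_le_two (by linarith)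
  · rintro _ ⟨k, ⟨hk1, hk2⟩, rfl⟩
    have hk1' : (1 : ℝ) ≤ k := by exact_mod_cast hk1
    have hk2' : (k : ℝ) ≤ K := by exact_mod_cast hk2
    simpa [mul_comm 2 π, mul_assoc] using
      abs_cos_pi_mul_div_le hD0 zero_le_two (j := 2 * k) (by linarith) (by linarith)

theorem cos_pi_div_mem_upperBounds_abs_cos_odd (hD : 2 * K ≤ D) :
    cos (π / D) ∈
      upperBounds ((fun k : ℕ => |cos (π * (2 * k - 1 : ℕ) / D)|) '' Set.Icc 1 K) := by
  rintro _ ⟨k, ⟨hk1, hk2⟩, rfl⟩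
  have hk1' : (1 : ℝ) ≤ k := by exact_mod_cast hk1
  have hk2' : (k : ℝ) ≤ K := by exact_mod_cast hk2
  have hcast : ((2 * k - 1 : ℕ) : ℝ) = 2 * k - 1 := by
    rw [Nat.cast_sub (by omega), Nat.cast_mul, Nat.cast_ofNat, Nat.cast_one]
  simpa [hcast] using abs_cos_pi_mul_div_le (by linarith) zero_le_one (j := 2 * k - 1)
    (by linarith) (by linarith)

theorem isGreatest_abs_cos_odd_of_eq_two_mul (hK : 1 ≤ K) (hD : 2 * K = D) :
    IsGreatest ((fun k : ℕ => |cos (π * (2 * k - 1 : ℕ) / D)|) '' Set.Icc 1 K)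
      (cos (π / D)) := by
  have hK' : (1 : ℝ) ≤ K := by exact_mod_cast hK
  have hD0 : 0 < D := by rw [← hD]; positivity
  refine ⟨⟨K, ⟨hK, le_rfl⟩, ?_⟩, cos_pi_div_mem_upperBounds_abs_cos_odd hD.le⟩
  have hcast : ((2 * K - 1 : ℕ) : ℝ) = 2 * K - 1 := by
    rw [Nat.cast_sub (by omega), Nat.cast_mul, Nat.cast_ofNat, Nat.cast_one]
  simpa [hcast] using abs_cos_pi_mul_div_eq_of_add_eq hD0 zero_le_one (j := 2 * K - 1)
    (by linarith) (by linarith)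

end Families

theorem blossom_spectral_radius_general (n m : ℕ) (hn : 1 ≤ n)
    (A : Matrix (Fin (n + m)) (Fin (n + m)) ℝ)
    (hA : {μ : ℝ | ∃ v : Fin (n + m) → ℝ, v ≠ 0 ∧ A.mulVec v = μ • v}
      = (fun k : ℕ => Real.cos (2 * π * k / (2 * n + m + 1))) ''
          (Set.Icc 1 (n + m / 2))
        ∪ (fun k : ℕ => Real.cos (π * (2 * k - 1 : ℕ) / (m + 1))) ''
            (Set.Icc 1 ((m + 1) / 2))) :
    IsGreatest {r : ℝ | ∃ μ : ℝ,
        (∃ v : Fin (n + m) → ℝ, v ≠ 0 ∧ A.mulVec v = μ • v) ∧ r = |μ|}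
      (if Even m then Real.cos (π / (2 * n + m + 1))
        else if m ≤ 2 * n - 1 then Real.cos (2 * π / (2 * n + m + 1))
        else Real.cos (π / (m + 1))) := by
  rw [setOf_exists_and_eq_abs, hA, Set.image_union, Set.image_image, Set.image_image]
  split_ifs with hm hmn
  · have hmod : m % 2 = 0 := Nat.even_iff.mp hm
    refine isGreatest_union_iff.2 (Or.inl ⟨?_, fun x hx => ?_⟩)
    · exact isGreatest_abs_cos_two_pi_mul_div_of_eq_two_mul_add_one (by omega)
        (by exact_mod_cast (by omega : 2 * (n + m / 2) + 1 = 2 * n + m + 1))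
    · refine (cos_pi_div_mem_upperBounds_abs_cos_odd ?_ hx).trans
        (cos_pi_div_le_cos_pi_div (by simp) (by simp))
      exact_mod_cast (by omega : 2 * ((m + 1) / 2) ≤ m + 1)
  all_goals
    have hmod : m % 2 = 1 := Nat.odd_iff.mp (Nat.not_even_iff_odd.mp hm)
    have hunion := (isGreatest_abs_cos_two_pi_mul_div_of_eq_two_mul_add_two
      (K := n + m / 2) (D := 2 * n + m + 1) (by omega)
      (by exact_mod_cast (by omega : 2 * (n + m / 2) + 2 = 2 * n + m + 1))).union
      (isGreatest_abs_cos_odd_of_eq_two_mul (K := (m + 1) / 2) (D := m + 1) (by omega)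
        (by exact_mod_cast (by omega : 2 * ((m + 1) / 2) = m + 1)))
  · rwa [max_eq_left (cos_pi_div_le_cos_two_pi_div (by simp) (by norm_cast; omega))] at hunion
  · rwa [max_eq_right (cos_two_pi_div_le_cos_pi_div (by norm_cast; omega)
      (by norm_cast; omega))] at hunion

/-- The spectral radius of the blossom matrix equals cos(π/(2n+m+1)) if m is
even; cos(2π/(2n+m+1)) if m is odd and m ≤ 2n−1; and cos(π/(m+1)) if m is odd
and m > 2n−1. -/
theorem blossom_spectral_radius (n m : ℕ) (hn : 1 ≤ n) (hm : 1 ≤ m)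
    (A : Matrix (Fin (n + m)) (Fin (n + m)) ℝ)
    (hA : {μ : ℝ | ∃ v : Fin (n + m) → ℝ, v ≠ 0 ∧ A.mulVec v = μ • v}
      = (fun k : ℕ => Real.cos (2 * π * k / (2 * n + m + 1))) ''
          (Set.Icc 1 (n + m / 2))
        ∪ (fun k : ℕ => Real.cos (π * (2 * k - 1 : ℕ) / (m + 1))) ''
            (Set.Icc 1 ((m + 1) / 2))) :
    IsGreatest {r : ℝ | ∃ μ : ℝ,
        (∃ v : Fin (n + m) → ℝ, v ≠ 0 ∧ A.mulVec v = μ • v) ∧ r = |μ|}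
      (if Even m then Real.cos (π / (2 * n + m + 1))
        else if m ≤ 2 * n - 1 then Real.cos (2 * π / (2 * n + m + 1))
        else Real.cos (π / (m + 1))) :=
  blossom_spectral_radius_general n m hn A hA
end

section
/- If the bicycle graph has both loop lengths l and m even, then −1 is an eigenvalue of the bicycle matrix A with eigenvector (1,−1,1,−1,…,1,−1)ᵀ ∈ ℝ^{l+n+m}. -/
/-- If both loop lengths l and m of the bicycle are even, then −1 is an
eigenvalue of the bicycle matrix with eigenvector (1,−1,1,−1,…,1,−1)ᵀ. -/
theorem bicycle_minus_one_eigenvalue (l m n : ℕ)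
    (hl : 1 ≤ l) (hm : 1 ≤ m) (hn : 1 ≤ n)
    (hle : Even l) (hme : Even m)
    (A : Matrix (Fin (l + n + m)) (Fin (l + n + m)) ℝ)
    (hA : ∀ v : Fin (l + n + m) → ℝ,
      (A.mulVec v ⟨0, by omega⟩
        = v ⟨1, by omega⟩ / 2 - v ⟨l, by omega⟩ / 2) ∧
      (∀ i : ℕ, ∀ _h1 : 0 < i, ∀ _h2 : i < l + n + m - 1,
        A.mulVec v ⟨i, by omega⟩
          = (v ⟨i - 1, by omega⟩ + v ⟨i + 1, by omega⟩) / 2) ∧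
      (A.mulVec v ⟨l + n + m - 1, by omega⟩
        = v ⟨l + n + m - 2, by omega⟩ / 2 - v ⟨l + n - 1, by omega⟩ / 2)) :
    (fun i : Fin (l + n + m) => ((-1 : ℝ) ^ i.val)) ≠ 0 ∧
    A.mulVec (fun i : Fin (l + n + m) => ((-1 : ℝ) ^ i.val))
      = (-1 : ℝ) • (fun i : Fin (l + n + m) => ((-1 : ℝ) ^ i.val)) := by
  obtain ⟨a, ha⟩ := hle
  obtain ⟨b, hb⟩ := hme
  constructor
  · intro h
    have h0 := congrFun h ⟨0, by omega⟩
    simp at h0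
  · funext i
    obtain ⟨h0, hmid, hlast⟩ := hA (fun i : Fin (l + n + m) => ((-1 : ℝ) ^ i.val))
    simp only [Pi.smul_apply, smul_eq_mul]
    rcases Nat.eq_zero_or_pos i.val with hi | hi
    · have hieq : i = ⟨0, by omega⟩ := Fin.ext hi
      rw [hieq, h0]
      simp only [Fin.val_mk]
      have e : l = 2 * a := by omega
      rw [e]
      simp [pow_mul]
      norm_num
    · rcases Nat.lt_or_ge i.val (l + n + m - 1) with hi2 | hi2
      · have hieq : i = ⟨i.val, by omega⟩ := Fin.ext rfl
        rw [hieq, hmid i.val hi hi2]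
        simp only [Fin.val_mk]
        obtain ⟨j, hj⟩ : ∃ j, i.val = j + 1 := ⟨i.val - 1, by omega⟩
        rw [hj]
        simp only [Nat.add_sub_cancel, pow_succ, pow_add]
        ring
      · have hival : i.val = l + n + m - 1 := by omega
        have hieq : i = ⟨l + n + m - 1, by omega⟩ := Fin.ext hival
        rw [hieq, hlast]
        simp only [Fin.val_mk]
        have e1 : l + n + m - 2 = (l + n - 1) + (2 * b - 1) := by omega
        have e2 : l + n + m - 1 = (l + n - 1) + (2 * b) := by omega
        have e3 : 2 * b - 1 = 2 * (b - 1) + 1 := by omega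
        rw [e1, e2, e3]
        simp only [pow_add, pow_mul]
        norm_num
        ring
end
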